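/- arXiv:2310.10064 — 2 statements merged into one kernel-verified Lean document; each statement's English description precedes it below -/
import Mathlib

section
/- Let G be a simple graph on Fin N with real Laplacian matrix L = G.lapMatrix ℝ. Suppose μ : Fin N → ℝ and w : Fin N → (Fin N → ℝ) are such that the family w is orthonormal with respect to the standard real inner product and L = Σ_i μ_i • (w_i · w_iᵀ) (i.e., L s t = Σ_i μ_i (w_i s)(w_i t)). Let g : ℝ → ℝ, let x : Fin N → ℝ be a signal with coefficients c_i = Σ_v (w_i v)(x v), and let x' = Σ_i g(μ_i) c_i • w_i be the filtered signal. Then Σ_{(s,t) : G.Adj s t} (x' s − x' t)² = 2 · Σ_{i=1}^N c_i² · μ_i · g(μ_i)², where the sum on the left ranges over ordered pairs of adjacent vertices. -/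
/-!
Summed over ordered pairs, the squared differences along edges count every edge twice, so they
equal `2 x'ᵀ L x'`. In the eigenbasis this quadratic form is `Σ_i μ_i ⟨w_i, x'⟩²`, and by
orthonormality the coefficient `⟨w_i, x'⟩` of the filtered signal is `g(μ_i) c_i`.
-/

open Matrix Finset

theorem Matrix.eq_sum_smul_vecMulVec_of_apply {ι n R : Type*} [Fintype ι] [CommSemiring R]
    {L : Matrix n n R} {μ : ι → R} {w : ι → n → R}
    (h : ∀ s t, L s t = ∑ i, μ i * (w i s * w i t)) :
    L = ∑ i, μ i • vecMulVec (w i) (w i) := by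
  ext s t
  simp [h, Matrix.sum_apply, vecMulVec_apply]

theorem Matrix.dotProduct_mulVec_sum_smul_vecMulVec {ι n R : Type*} [Fintype ι] [Fintype n]
    [CommSemiring R] (μ : ι → R) (w : ι → n → R) (y : n → R) :
    y ⬝ᵥ (∑ i, μ i • vecMulVec (w i) (w i)) *ᵥ y = ∑ i, μ i * (w i ⬝ᵥ y) ^ 2 := by
  simp only [Matrix.sum_mulVec, smul_mulVec, vecMulVec_mulVec, dotProduct_sum, dotProduct_smul,
    MulOpposite.smul_eq_mul_unop, MulOpposite.unop_op, smul_eq_mul]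
  refine sum_congr rfl fun i _ => ?_
  rw [dotProduct_comm y]
  ring

theorem Matrix.dotProduct_sum_smul_of_orthonormal {ι n R : Type*} [Fintype ι] [Fintype n]
    [DecidableEq ι] [CommSemiring R] {w : ι → n → R}
    (hw : ∀ i j, w i ⬝ᵥ w j = if i = j then 1 else 0) (a : ι → R) (i : ι) :
    w i ⬝ᵥ ∑ j, a j • w j = a i := by
  simp [dotProduct_sum, hw]

theorem SimpleGraph.sum_adj_sq_sub_eq_two_mul_dotProduct_lapMatrix_mulVec {V R : Type*}
    [Fintype V] [DecidableEq V] (G : SimpleGraph V) [DecidableRel G.Adj] [Field R] [CharZero R]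
    (x : V → R) :
    ∑ p ∈ univ.filter (fun p : V × V => G.Adj p.1 p.2), (x p.1 - x p.2) ^ 2
      = 2 * (x ⬝ᵥ G.lapMatrix R *ᵥ x) := by
  have h := G.lapMatrix_toLinearMap₂' R x
  rw [toLinearMap₂'_apply'] at h
  rw [h, mul_div_cancel₀ _ two_ne_zero, sum_filter, ← sum_product']
  rfl

theorem stmt8_general (N : ℕ) (G : SimpleGraph (Fin N)) [DecidableRel G.Adj]
    (μ : Fin N → ℝ) (w : Fin N → Fin N → ℝ)
    (horth : ∀ i j : Fin N, ∑ v : Fin N, w i v * w j v = if i = j then (1 : ℝ) else 0)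
    (hdecomp : ∀ s t : Fin N, G.lapMatrix ℝ s t = ∑ i : Fin N, μ i * (w i s * w i t))
    (g : ℝ → ℝ)
    (c : Fin N → ℝ)
    (x' : Fin N → ℝ) (hx' : ∀ v, x' v = ∑ i : Fin N, g (μ i) * c i * w i v) :
    ∑ p ∈ Finset.univ.filter (fun p : Fin N × Fin N => G.Adj p.1 p.2),
        (x' p.1 - x' p.2) ^ 2
      = 2 * ∑ i : Fin N, (c i) ^ 2 * μ i * (g (μ i)) ^ 2 := by
  have hx'_eq : x' = ∑ i, (g (μ i) * c i) • w i := by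
    ext v
    simp [hx', Finset.sum_apply]
  have hcoeff (i : Fin N) : w i ⬝ᵥ x' = g (μ i) * c i := by
    rw [hx'_eq]
    exact dotProduct_sum_smul_of_orthonormal horth _ i
  rw [G.sum_adj_sq_sub_eq_two_mul_dotProduct_lapMatrix_mulVec,
    eq_sum_smul_vecMulVec_of_apply hdecomp, dotProduct_mulVec_sum_smul_vecMulVec]
  simp_rw [hcoeff]
  congr 1
  exact sum_congr rfl fun i _ => by ring

/-- Eq. 14/16 of the proof of Theorem 3.2 for the combinatorial Laplacian: given a
spectral decomposition `L s t = Σ_i μ_i (w_i s)(w_i t)` of `G.lapMatrix ℝ` into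
orthonormal eigenvectors `w_i`, Fourier coefficients `c_i = Σ_v (w_i v)(x v)`, and the
filtered signal `x' = Σ_i g(μ_i) c_i • w_i`, the total squared distance of `x'` over
ordered adjacent pairs equals `2 Σ_i c_i² μ_i g(μ_i)²`. -/
theorem stmt8 (N : ℕ) (G : SimpleGraph (Fin N)) [DecidableRel G.Adj]
    (μ : Fin N → ℝ) (w : Fin N → Fin N → ℝ)
    (horth : ∀ i j : Fin N, ∑ v : Fin N, w i v * w j v = if i = j then (1 : ℝ) else 0)
    (hdecomp : ∀ s t : Fin N, G.lapMatrix ℝ s t = ∑ i : Fin N, μ i * (w i s * w i t))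
    (g : ℝ → ℝ) (x : Fin N → ℝ)
    (c : Fin N → ℝ) (hc : ∀ i, c i = ∑ v : Fin N, w i v * x v)
    (x' : Fin N → ℝ) (hx' : ∀ v, x' v = ∑ i : Fin N, g (μ i) * c i * w i v) :
    ∑ p ∈ Finset.univ.filter (fun p : Fin N × Fin N => G.Adj p.1 p.2),
        (x' p.1 - x' p.2) ^ 2
      = 2 * ∑ i : Fin N, (c i) ^ 2 * μ i * (g (μ i)) ^ 2 :=
  stmt8_general N G μ w horth hdecomp g c x' hx'
end

section
/- Let C ≥ 2 and N ≥ 1 be natural numbers, let h ∈ ℝ, and let Δs, d_in¹, d_in², d_out¹, d_out² be real numbers satisfying Δs > 0, d_out¹ − d_out² = (1 − h)·Δs and d_in¹ − d_in² = h·Δs. For i ∈ {1,2} define Δd̄ⁱ = (2C / ((C−1)·N²)) · (d_outⁱ − (C−1)·d_inⁱ). Then Δd̄¹ − Δd̄² = (2C / ((C−1)·N²)) · Δs · (1 − C·h); consequently, if h > 1/C then Δd̄¹ < Δd̄², and if h < 1/C then Δd̄¹ > Δd̄². -/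
/-! The filter-wise difference of the class-separation gaps is linear in the edge-distance gap
`Δs`: it equals `Δs · (1 - C h)` up to the positive normalisation `2C / ((C-1) N²)`, so its sign
is decided by comparing the homophily ratio `h` with the random-graph value `1 / C`. -/

theorem mul_sub_sub_mul_sub_eq {R : Type*} [CommRing R] {k c h Δ x₁ x₂ y₁ y₂ : R}
    (hx : x₁ - x₂ = (1 - h) * Δ) (hy : y₁ - y₂ = h * Δ) :
    k * (x₁ - (c - 1) * y₁) - k * (x₂ - (c - 1) * y₂) = k * Δ * (1 - c * h) := by
  linear_combination k * hx - k * (c - 1) * hy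

theorem two_mul_div_sub_one_mul_sq_pos {C N : ℕ} (hC : 2 ≤ C) (hN : 1 ≤ N) :
    0 < 2 * (C : ℝ) / (((C : ℝ) - 1) * (N : ℝ) ^ 2) := by
  have hC' : (1 : ℝ) < C := by exact_mod_cast hC
  have hN' : (0 : ℝ) < N := by exact_mod_cast hN
  have : (0 : ℝ) < C - 1 := sub_pos.mpr hC'
  positivity

theorem one_sub_mul_neg_of_one_div_lt {K : Type*} [Field K] [LinearOrder K] [IsStrictOrderedRing K]
    {c h : K} (hc : 0 < c) (hh : 1 / c < h) : 1 - c * h < 0 := by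
  rw [div_lt_iff₀ hc] at hh
  linarith [mul_comm c h]

theorem one_sub_mul_pos_of_lt_one_div {K : Type*} [Field K] [LinearOrder K]
    [IsStrictOrderedRing K] {c h : K} (hc : 0 < c) (hh : h < 1 / c) : 0 < 1 - c * h := by
  rw [lt_div_iff₀ hc] at hh
  linarith [mul_comm c h]

/-- Algebraic core of Theorem 3.3: with `Δd̄ⁱ = (2C/((C−1)N²))(d_outⁱ − (C−1) d_inⁱ)`,
`d_out¹ − d_out² = (1−h) Δs`, `d_in¹ − d_in² = h Δs`, and `Δs > 0`, one has
`Δd̄¹ − Δd̄² = (2C/((C−1)N²)) Δs (1 − C h)`; hence `h > 1/C` gives `Δd̄¹ < Δd̄²`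
and `h < 1/C` gives `Δd̄¹ > Δd̄²`. -/
theorem stmt10 (C N : ℕ) (hC : 2 ≤ C) (hN : 1 ≤ N)
    (h Δs din1 din2 dout1 dout2 : ℝ)
    (hΔs : 0 < Δs)
    (hout : dout1 - dout2 = (1 - h) * Δs)
    (hin : din1 - din2 = h * Δs) :
    (2 * (C : ℝ) / (((C : ℝ) - 1) * (N : ℝ) ^ 2)) * (dout1 - ((C : ℝ) - 1) * din1)
        - (2 * (C : ℝ) / (((C : ℝ) - 1) * (N : ℝ) ^ 2)) * (dout2 - ((C : ℝ) - 1) * din2)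
      = (2 * (C : ℝ) / (((C : ℝ) - 1) * (N : ℝ) ^ 2)) * Δs * (1 - (C : ℝ) * h) ∧
    (h > 1 / (C : ℝ) →
      (2 * (C : ℝ) / (((C : ℝ) - 1) * (N : ℝ) ^ 2)) * (dout1 - ((C : ℝ) - 1) * din1)
        < (2 * (C : ℝ) / (((C : ℝ) - 1) * (N : ℝ) ^ 2)) * (dout2 - ((C : ℝ) - 1) * din2)) ∧
    (h < 1 / (C : ℝ) →
      (2 * (C : ℝ) / (((C : ℝ) - 1) * (N : ℝ) ^ 2)) * (dout1 - ((C : ℝ) - 1) * din1)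
        > (2 * (C : ℝ) / (((C : ℝ) - 1) * (N : ℝ) ^ 2)) * (dout2 - ((C : ℝ) - 1) * din2)) := by
  have hscale : 0 < 2 * (C : ℝ) / (((C : ℝ) - 1) * (N : ℝ) ^ 2) * Δs :=
    mul_pos (two_mul_div_sub_one_mul_sq_pos hC hN) hΔs
  have hCpos : (0 : ℝ) < C := by exact_mod_cast (show 0 < C by omega)
  have key := mul_sub_sub_mul_sub_eq (k := 2 * (C : ℝ) / (((C : ℝ) - 1) * (N : ℝ) ^ 2))
    (c := (C : ℝ)) hout hin
  refine ⟨key, fun hh => ?_, fun hh => ?_⟩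
  · have := mul_neg_of_pos_of_neg hscale (one_sub_mul_neg_of_one_div_lt hCpos hh)
    linarith
  · have := mul_pos hscale (one_sub_mul_pos_of_lt_one_div hCpos hh)
    linarith
end
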